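/- arXiv:1602.00399 — 3 statements merged into one kernel-verified Lean document; each statement's English description precedes it below -/
import Mathlib

section
/- For 0 < θ ≤ π/4, the function f(β) = (cos(θ − β) − sin β) / (cos(θ/2 − β) − sin(3θ/2 − β)) is (weakly) decreasing in β on the interval [θ/2, θ], and hence is maximized at β = θ/2 on this interval. -/
/-! Both numerator and denominator are of the form `cos x - sin y`, which factors as
`2 sin ((x - y)/2 + π/4) sin (π/4 - (x + y)/2)`. They share the factor `2 sin (π/4 - θ/2) > 0`,
so the quotient is `sin (θ/2 + π/4 - β) / sin (β - θ + π/4)`: a nonnegative decreasing sine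
over a positive increasing one, both arguments staying in `[0, π/2]`. -/

open Real Set

theorem Real.cos_sub_sin (x y : ℝ) :
    cos x - sin y = 2 * sin ((x - y) / 2 + π / 4) * sin (π / 4 - (x + y) / 2) := by
  rw [← cos_pi_div_two_sub y, cos_sub_cos, ← neg_neg (sin (π / 4 - _)), ← sin_neg]
  ring_nf

theorem AntitoneOn.div_monotoneOn {s : Set ℝ} {f g : ℝ → ℝ} (hf : AntitoneOn f s)
    (hg : MonotoneOn g s) (hf0 : ∀ x ∈ s, 0 ≤ f x) (hg0 : ∀ x ∈ s, 0 < g x) :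
    AntitoneOn (fun x => f x / g x) s :=
  fun _ ha _ hb hab => div_le_div₀ (hf0 _ ha) (hf ha hb hab) (hg0 _ ha) (hg ha hb hab)

theorem cos_sub_sin_div_cos_sub_sin_eq {θ : ℝ} (hθ : sin (π / 4 - θ / 2) ≠ 0) (β : ℝ) :
    (cos (θ - β) - sin β) / (cos (θ / 2 - β) - sin (3 * θ / 2 - β)) =
      sin (θ / 2 + π / 4 - β) / sin (β - θ + π / 4) := by
  have hnum : cos (θ - β) - sin β = 2 * sin (π / 4 - θ / 2) * sin (θ / 2 + π / 4 - β) := by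
    rw [cos_sub_sin]; ring_nf
  have hden : cos (θ / 2 - β) - sin (3 * θ / 2 - β) =
      2 * sin (π / 4 - θ / 2) * sin (β - θ + π / 4) := by
    rw [cos_sub_sin]; ring_nf
  rw [hnum, hden, mul_div_mul_left _ _ (mul_ne_zero two_ne_zero hθ)]

theorem stmt_3_general (θ : ℝ) (h0 : 0 < θ) (h1 : θ ≤ π / 4) :
    AntitoneOn (fun β => (Real.cos (θ - β) - Real.sin β) /
        (Real.cos (θ / 2 - β) - Real.sin (3 * θ / 2 - β))) (Set.Icc (θ / 2) θ) ∧
    ∀ β ∈ Set.Icc (θ / 2) θ,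
      (Real.cos (θ - β) - Real.sin β) /
          (Real.cos (θ / 2 - β) - Real.sin (3 * θ / 2 - β)) ≤
        (Real.cos (θ - θ / 2) - Real.sin (θ / 2)) /
          (Real.cos (θ / 2 - θ / 2) - Real.sin (3 * θ / 2 - θ / 2)) := by
  have hpi := pi_pos
  have hs : sin (π / 4 - θ / 2) ≠ 0 :=
    (sin_pos_of_pos_of_lt_pi (by linarith) (by linarith)).ne'
  have hanti : AntitoneOn (fun β => (cos (θ - β) - sin β) /
      (cos (θ / 2 - β) - sin (3 * θ / 2 - β))) (Icc (θ / 2) θ) := by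
    simp only [cos_sub_sin_div_cos_sub_sin_eq hs]
    refine AntitoneOn.div_monotoneOn ?_ ?_ ?_ ?_
    · exact fun a ⟨_, ha⟩ b ⟨hb, _⟩ hab =>
        sin_le_sin_of_le_of_le_pi_div_two (by linarith) (by linarith) (by linarith)
    · exact fun a ⟨ha, _⟩ b ⟨_, hb⟩ hab =>
        sin_le_sin_of_le_of_le_pi_div_two (by linarith) (by linarith) (by linarith)
    · exact fun β ⟨_, hβ⟩ => sin_nonneg_of_nonneg_of_le_pi (by linarith) (by linarith)
    · exact fun β ⟨hβ, _⟩ => sin_pos_of_pos_of_lt_pi (by linarith) (by linarith)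
  exact ⟨hanti, fun β hβ => hanti ⟨le_rfl, by linarith⟩ hβ hβ.1⟩

theorem stmt_3 (θ : ℝ) (h0 : 0 < θ) (h1 : θ ≤ π / 4)
    (hden : ∀ β ∈ Set.Icc (θ / 2) θ,
      0 < Real.cos (θ / 2 - β) - Real.sin (3 * θ / 2 - β)) :
    AntitoneOn (fun β => (Real.cos (θ - β) - Real.sin β) /
        (Real.cos (θ / 2 - β) - Real.sin (3 * θ / 2 - β))) (Set.Icc (θ / 2) θ) ∧
    ∀ β ∈ Set.Icc (θ / 2) θ,
      (Real.cos (θ - β) - Real.sin β) /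
          (Real.cos (θ / 2 - β) - Real.sin (3 * θ / 2 - β)) ≤
        (Real.cos (θ - θ / 2) - Real.sin (θ / 2)) /
          (Real.cos (θ / 2 - θ / 2) - Real.sin (3 * θ / 2 - θ / 2)) :=
  stmt_3_general θ h0 h1
end

section
/- For 0 < θ ≤ π/4, the function g(α) = cos α / cos(θ/2) + (cos α · tan(θ/2) + sin α) / (cos(θ/2) − sin(θ/2)) is (weakly) increasing on [0, θ/2], and hence is maximized at α = θ/2. -/
/-!
Since `tan (θ/2) = s / c` with `c = cos (θ/2)`, `s = sin (θ/2)`, the two cosine terms combine: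
`cos α / c + cos α * (s / c) / (c - s) = cos α / (c - s)`, so the function is just
`(cos α + sin α) / (c - s) = √2 sin (α + π/4) / (c - s)`, increasing for `α ≤ π/4`.
-/

namespace Real

theorem cos_add_sin_eq_sqrt_two_mul_sin (x : ℝ) : cos x + sin x = √2 * sin (x + π / 4) := by
  rw [sin_add, sin_pi_div_four, cos_pi_div_four]
  ring_nf
  rw [sq_sqrt zero_le_two]
  ring

theorem cos_sub_sin_eq_sqrt_two_mul_cos (x : ℝ) : cos x - sin x = √2 * cos (x + π / 4) := by
  rw [cos_add, sin_pi_div_four, cos_pi_div_four]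
  ring_nf
  rw [sq_sqrt zero_le_two]
  ring

theorem monotoneOn_cos_add_sin :
    MonotoneOn (fun x => cos x + sin x) (Set.Icc (-(3 * π / 4)) (π / 4)) := by
  intro a ⟨ha₀, ha₁⟩ b ⟨hb₀, hb₁⟩ hab
  simp only [cos_add_sin_eq_sqrt_two_mul_sin]
  gcongr
  exact strictMonoOn_sin.monotoneOn ⟨by linarith, by linarith⟩ ⟨by linarith, by linarith⟩
    (by linarith)

theorem cos_sub_sin_pos {x : ℝ} (h₀ : -(3 * π / 4) < x) (h₁ : x < π / 4) :
    0 < cos x - sin x := by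
  rw [cos_sub_sin_eq_sqrt_two_mul_cos]
  exact mul_pos (by positivity) (cos_pos_of_mem_Ioo ⟨by linarith, by linarith⟩)

theorem cos_div_add_cos_mul_tan_add_sin_div {x : ℝ} (hc : cos x ≠ 0) (hcs : cos x - sin x ≠ 0)
    (α : ℝ) :
    cos α / cos x + (cos α * tan x + sin α) / (cos x - sin x) =
      (cos α + sin α) / (cos x - sin x) := by
  rw [tan_eq_sin_div_cos]
  field_simp
  ring

end Real

open Real
theorem stmt_4 (θ : ℝ) (h0 : 0 < θ) (h1 : θ ≤ π / 4) :
    MonotoneOn (fun α => Real.cos α / Real.cos (θ / 2) +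
        (Real.cos α * Real.tan (θ / 2) + Real.sin α) /
          (Real.cos (θ / 2) - Real.sin (θ / 2))) (Set.Icc 0 (θ / 2)) ∧
    ∀ α ∈ Set.Icc 0 (θ / 2),
      Real.cos α / Real.cos (θ / 2) +
          (Real.cos α * Real.tan (θ / 2) + Real.sin α) /
            (Real.cos (θ / 2) - Real.sin (θ / 2)) ≤
        Real.cos (θ / 2) / Real.cos (θ / 2) +
          (Real.cos (θ / 2) * Real.tan (θ / 2) + Real.sin (θ / 2)) /
            (Real.cos (θ / 2) - Real.sin (θ / 2)) := by
  have hπ := pi_pos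
  have hc : cos (θ / 2) ≠ 0 := (cos_pos_of_mem_Ioo ⟨by linarith, by linarith⟩).ne'
  have hcs : 0 < cos (θ / 2) - sin (θ / 2) := cos_sub_sin_pos (by linarith) (by linarith)
  have hmono : MonotoneOn (fun α => cos α / cos (θ / 2) +
      (cos α * tan (θ / 2) + sin α) / (cos (θ / 2) - sin (θ / 2))) (Set.Icc 0 (θ / 2)) := by
    simp only [cos_div_add_cos_mul_tan_add_sin_div hc hcs.ne']
    intro a ha b hb hab
    refine div_le_div_of_nonneg_right ?_ hcs.le
    exact monotoneOn_cos_add_sin ⟨by linarith [ha.1], by linarith [ha.2]⟩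
      ⟨by linarith [hb.1], by linarith [hb.2]⟩ hab
  exact ⟨hmono, fun α hα => hmono hα (Set.right_mem_Icc.mpr (by linarith)) hα.2⟩
end

section
/- For 0 < θ ≤ 2π/9 (in particular for θ = 2π/(4k+5) with k ≥ 1 an integer), 1 + 2 sin(θ/2)·cos(θ/4)/(cos(θ/2) − sin(3θ/4)) > cos(θ/4)/(cos(θ/2) − sin(3θ/4)), i.e. the quantity 1 + 2 sin(θ/2)·cos(θ/4)/(cos(θ/2) − sin(3θ/4)) is strictly greater than the unordered spanning-ratio bound cos(θ/4)/(cos(θ/2) − sin(3θ/4)). -/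
open Real

lemma sin_lt_sin_aux {x y : ℝ} (hx : -(π/2) ≤ x) (hxy : x < y) (hy : y ≤ π/2) :
    Real.sin x < Real.sin y :=
  Real.strictMonoOn_sin ⟨hx, le_of_lt (lt_of_lt_of_le hxy hy)⟩
    ⟨le_trans hx (le_of_lt hxy), hy⟩ hxy

theorem stmt_9 (θ : ℝ) (h0 : 0 < θ) (h1 : θ ≤ 2 * π / 9) :
    1 + 2 * Real.sin (θ / 2) * Real.cos (θ / 4) /
        (Real.cos (θ / 2) - Real.sin (3 * θ / 4)) >
      Real.cos (θ / 4) / (Real.cos (θ / 2) - Real.sin (3 * θ / 4)) := by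
  have hpi := Real.pi_pos
  -- denominator positive
  have hd : Real.sin (3 * θ / 4) < Real.cos (θ / 2) := by
    rw [← Real.sin_pi_div_two_sub]
    apply sin_lt_sin_aux
    · nlinarith
    · nlinarith
    · nlinarith
  have hdpos : 0 < Real.cos (θ / 2) - Real.sin (3 * θ / 4) := by linarith
  -- product to sum: 2 sin(θ/2) cos(θ/4) = sin(3θ/4) + sin(θ/4)
  have hps : 2 * Real.sin (θ / 2) * Real.cos (θ / 4)
      = Real.sin (3 * θ / 4) + Real.sin (θ / 4) := by
    have e1 := Real.sin_add (θ/2) (θ/4)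
    have e2 := Real.sin_sub (θ/2) (θ/4)
    have a1 : θ/2 + θ/4 = 3 * θ / 4 := by ring
    have a2 : θ/2 - θ/4 = θ / 4 := by ring
    rw [a1] at e1
    rw [a2] at e2
    linarith
  -- key: cos(θ/2) + sin(θ/4) > cos(θ/4)
  have hkey : Real.cos (θ / 4) < Real.cos (θ / 2) + Real.sin (θ / 4) := by
    have hcc : Real.cos (θ / 4) - Real.cos (θ / 2)
        = 2 * Real.sin (3 * θ / 8) * Real.sin (θ / 8) := by
      rw [Real.cos_sub_cos]
      ring_nf
      rw [show θ * (-1/8) = -(θ * (1/8)) by ring, Real.sin_neg]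
      ring
    have hs4 : Real.sin (θ / 4) = 2 * Real.sin (θ / 8) * Real.cos (θ / 8) := by
      have : (θ / 4 : ℝ) = 2 * (θ / 8) := by ring
      rw [this, Real.sin_two_mul]
    have hs8 : 0 < Real.sin (θ / 8) := by
      apply Real.sin_pos_of_pos_of_lt_pi <;> nlinarith
    have hlt : Real.sin (3 * θ / 8) < Real.cos (θ / 8) := by
      rw [← Real.sin_pi_div_two_sub]
      apply sin_lt_sin_aux
      · nlinarith
      · nlinarith
      · nlinarith
    nlinarith
  rw [gt_iff_lt, div_lt_iff₀ hdpos]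
  have : (1 + 2 * Real.sin (θ / 2) * Real.cos (θ / 4) /
      (Real.cos (θ / 2) - Real.sin (3 * θ / 4))) *
      (Real.cos (θ / 2) - Real.sin (3 * θ / 4))
      = (Real.cos (θ / 2) - Real.sin (3 * θ / 4)) +
        2 * Real.sin (θ / 2) * Real.cos (θ / 4) := by
    rw [add_mul, div_mul_cancel₀ _ hdpos.ne']; ring
  rw [this, hps]
  linarith
end
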